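/- Let X ∈ ℝ^{m×n} and let r ≤ m∧n. For any B ∈ ℝ^{m×n} with rank(B) ≤ r and any q ≥ 1 with 1/p + 1/q = 1, |⟨B, X⟩| ≤ ‖B‖_q · ‖X_{max(r)}‖_p, where ⟨B, X⟩ = tr(B^⊤X). -/

import Mathlib

open scoped ENNReal
open Matrix

theorem Matrix.isHermitian_transpose_mul_self {m n : Type*} [Fintype m]
    (A : Matrix m n ℝ) : (Aᵀ * A).IsHermitian := by
  simpa [Matrix.conjTranspose_eq_transpose_of_trivial] using
    Matrix.isHermitian_conjTranspose_mul_self A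

/-- The `i`-th largest singular value (0-indexed) of a real matrix. -/
noncomputable def sval {m n : ℕ} (A : Matrix (Fin m) (Fin n) ℝ) : ℕ → ℝ := fun i =>
  if h : i < n then
    Real.sqrt ((Matrix.isHermitian_transpose_mul_self A).eigenvalues
      (Tuple.sort ((Matrix.isHermitian_transpose_mul_self A).eigenvalues) ⟨n - 1 - i, by omega⟩))
  else 0

/-- Truncated Schatten-q norm (ℓ_q norm of the top `r` singular values), q ∈ [1,∞]. -/
noncomputable def schattenTE {m n : ℕ} (q : ℝ≥0∞) (r : ℕ) (A : Matrix (Fin m) (Fin n) ℝ) : ℝ :=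
  if q = ∞ then sval A 0
  else (∑ i ∈ Finset.range r, sval A i ^ q.toReal) ^ (1 / q.toReal)

/-- Schatten-q norm, q ∈ [1,∞]. -/
noncomputable def schattenE {m n : ℕ} (q : ℝ≥0∞) (A : Matrix (Fin m) (Fin n) ℝ) : ℝ :=
  schattenTE q n A

/-- Truncated Schatten-q norm for a real exponent q. -/
noncomputable def schattenTR {m n : ℕ} (q : ℝ) (r : ℕ) (A : Matrix (Fin m) (Fin n) ℝ) : ℝ :=
  (∑ i ∈ Finset.range r, sval A i ^ q) ^ (1 / q)

/-- Schatten-q norm for a real exponent q. -/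
noncomputable def schattenR {m n : ℕ} (q : ℝ) (A : Matrix (Fin m) (Fin n) ℝ) : ℝ :=
  schattenTR q n A

/-- `Ahat` is a best rank-`r` approximation of `B` (in Frobenius norm). -/
def IsBestRankApprox {m n : ℕ} (r : ℕ) (B Ahat : Matrix (Fin m) (Fin n) ℝ) : Prop :=
  Ahat.rank ≤ r ∧ ∀ M : Matrix (Fin m) (Fin n) ℝ, M.rank ≤ r →
    schattenR 2 (B - Ahat) ≤ schattenR 2 (B - M)


section Helpers
open Finset
lemma sval_eq {m n : ℕ} (A : Matrix (Fin m) (Fin n) ℝ) (i : Fin n) :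
    sval A i = Real.sqrt ((Matrix.isHermitian_transpose_mul_self A).eigenvalues
      (Tuple.sort ((Matrix.isHermitian_transpose_mul_self A).eigenvalues) i.rev)) := by
  have h : (i : ℕ) < n := i.isLt
  rw [sval]
  rw [dif_pos h]
  have e : (⟨n - 1 - (i : ℕ), by omega⟩ : Fin n) = i.rev := by
    ext
    rw [Fin.val_rev]
    show n - 1 - (i : ℕ) = n - ((i : ℕ) + 1)
    omega
  rw [e]

lemma eig_nonneg {m n : ℕ} (A : Matrix (Fin m) (Fin n) ℝ) (k : Fin n) :
    0 ≤ (Matrix.isHermitian_transpose_mul_self A).eigenvalues k := by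
  have h : (Aᵀ * A).PosSemidef := by
    have := Matrix.posSemidef_conjTranspose_mul_self A
    rwa [Matrix.conjTranspose_eq_transpose_of_trivial] at this
  exact h.eigenvalues_nonneg k

lemma sval_nonneg {m n : ℕ} (A : Matrix (Fin m) (Fin n) ℝ) (i : ℕ) : 0 ≤ sval A i := by
  unfold sval; split <;> [exact Real.sqrt_nonneg _; exact le_refl 0]

lemma sval_anti {m n : ℕ} (A : Matrix (Fin m) (Fin n) ℝ) : Antitone (sval A) := by
  intro i j hij
  by_cases hj : j < n
  · have hi : i < n := lt_of_le_of_lt hij hj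
    rw [sval_eq A ⟨i, hi⟩, sval_eq A ⟨j, hj⟩]
    apply Real.sqrt_le_sqrt
    have := Tuple.monotone_sort ((Matrix.isHermitian_transpose_mul_self A).eigenvalues)
      (a := (⟨j, hj⟩ : Fin n).rev) (b := (⟨i, hi⟩ : Fin n).rev)
      (by rw [Fin.rev_le_rev]; exact Fin.mk_le_mk.mpr hij)
    exact this
  · rw [show sval A j = 0 from dif_neg hj]
    exact sval_nonneg A i

lemma sval_sq {m n : ℕ} (A : Matrix (Fin m) (Fin n) ℝ) (i : Fin n) :
    sval A i ^ 2 = (Matrix.isHermitian_transpose_mul_self A).eigenvalues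
      (Tuple.sort ((Matrix.isHermitian_transpose_mul_self A).eigenvalues) i.rev) := by
  rw [sval_eq, Real.sq_sqrt (eig_nonneg A _)]


lemma csabs {ι : Type*} (s : Finset ι) (f g : ι → ℝ) :
    ∑ i ∈ s, |f i| * |g i| ≤ Real.sqrt (∑ i ∈ s, f i ^ 2) * Real.sqrt (∑ i ∈ s, g i ^ 2) := by
  have h := Finset.sum_mul_sq_le_sq_mul_sq s (fun i => |f i|) (fun i => |g i|)
  simp only [sq_abs] at h
  calc ∑ i ∈ s, |f i| * |g i| = Real.sqrt ((∑ i ∈ s, |f i| * |g i|) ^ 2) := by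
        rw [Real.sqrt_sq (Finset.sum_nonneg fun i _ => mul_nonneg (abs_nonneg _) (abs_nonneg _))]
    _ ≤ Real.sqrt ((∑ i ∈ s, f i ^ 2) * (∑ i ∈ s, g i ^ 2)) := Real.sqrt_le_sqrt h
    _ = _ := Real.sqrt_mul (Finset.sum_nonneg fun i _ => sq_nonneg _) _

lemma bessel {N : ℕ} {ι : Type*} [DecidableEq ι] (s : Finset ι) (w : ι → (Fin N → ℝ))
    (hw : ∀ i ∈ s, ∀ j ∈ s, w i ⬝ᵥ w j = if i = j then 1 else 0)
    (u : Fin N → ℝ) : ∑ j ∈ s, (u ⬝ᵥ w j) ^ 2 ≤ u ⬝ᵥ u := by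
  have hsum : ∀ x : Fin N → ℝ, x ⬝ᵥ (∑ j ∈ s, (u ⬝ᵥ w j) • w j) =
      ∑ j ∈ s, (u ⬝ᵥ w j) * (x ⬝ᵥ w j) := by
    intro x
    induction s using Finset.induction with
    | empty => simp
    | insert a s h ih => simp_all [Finset.sum_insert h, dotProduct_add, dotProduct_smul]
  set c : ι → ℝ := fun j => u ⬝ᵥ w j with hc
  set S : Fin N → ℝ := ∑ j ∈ s, (u ⬝ᵥ w j) • w j with hS
  have hSw : ∀ j ∈ s, S ⬝ᵥ w j = c j := by
    intro j hj
    rw [dotProduct_comm, hsum]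
    rw [Finset.sum_eq_single j]
    · rw [hw j hj j hj]; simp [hc]
    · intro k hk hkj
      rw [hw j hj k hk, if_neg (fun h => hkj h.symm), mul_zero]
    · intro h; exact absurd hj h
  have hUS : u ⬝ᵥ S = ∑ j ∈ s, c j ^ 2 := by
    rw [hsum]
    exact Finset.sum_congr rfl fun j hj => (sq (c j)).symm
  have hSS : S ⬝ᵥ S = ∑ j ∈ s, c j ^ 2 := by
    rw [hsum]
    exact Finset.sum_congr rfl fun j hj => by rw [hSw j hj, sq]
  have h0 : 0 ≤ (u - S) ⬝ᵥ (u - S) := Finset.sum_nonneg fun i _ => mul_self_nonneg _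
  have hexp : (u - S) ⬝ᵥ (u - S) = u ⬝ᵥ u - ∑ j ∈ s, c j ^ 2 := by
    rw [sub_dotProduct, dotProduct_sub, dotProduct_sub,
      dotProduct_comm S u, hUS, hSS]
    ring
  rw [hexp] at h0
  have : ∀ j ∈ s, (u ⬝ᵥ w j) ^ 2 = c j ^ 2 := fun j hj => rfl
  rw [Finset.sum_congr rfl this]
  linarith


lemma trunc_sum (N k : ℕ) (hk : k < N) (s : ℕ → ℝ) :
    ∑ i ∈ Finset.range N, (if i ≤ k then s i else 0) = ∑ i ∈ Finset.range (k+1), s i := by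
  rw [← Finset.sum_subset (Finset.range_subset_range.mpr hk)
    (fun x _ hx => by rw [if_neg (by simp at hx; omega)])]
  exact Finset.sum_congr rfl fun i hi => if_pos (by simp at hi; omega)

lemma sum_prod_eq (N : ℕ) (g : ℕ → ℕ → ℝ) :
    (∑ p ∈ Finset.range N ×ˢ Finset.range N, g p.1 p.2)
      = ∑ i ∈ Finset.range N, ∑ j ∈ Finset.range N, g i j :=
  Finset.sum_product _ _ (fun p => g p.1 p.2)

lemma expand2 (N : ℕ) (a x d e : ℕ → ℝ) (F : ℕ → ℕ → ℝ)
    (hA : ∀ i < N, a i = ∑ k ∈ Finset.range N, if i ≤ k then d k else 0)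
    (hX : ∀ j < N, x j = ∑ l ∈ Finset.range N, if j ≤ l then e l else 0) :
    ∑ i ∈ Finset.range N, ∑ j ∈ Finset.range N, a i * x j * F i j
      = ∑ k ∈ Finset.range N, ∑ l ∈ Finset.range N, d k * e l *
          (∑ i ∈ Finset.range (k+1), ∑ j ∈ Finset.range (l+1), F i j) := by
  have step3 : ∀ k ∈ Finset.range N, ∀ l ∈ Finset.range N,
      ∑ i ∈ Finset.range N, ∑ j ∈ Finset.range N,
        (if i ≤ k then d k else 0) * ((if j ≤ l then e l else 0) * F i j)
      = d k * e l * (∑ i ∈ Finset.range (k+1), ∑ j ∈ Finset.range (l+1), F i j) := by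
    intro k hk l hl
    have hkN := mem_range.mp hk
    have hlN := mem_range.mp hl
    have inner : ∀ i, ∑ j ∈ Finset.range N, (if j ≤ l then e l else 0) * F i j
        = e l * ∑ j ∈ Finset.range (l+1), F i j := by
      intro i
      rw [Finset.mul_sum, ← trunc_sum N l hlN]
      exact Finset.sum_congr rfl fun j _ => by split <;> simp
    calc ∑ i ∈ Finset.range N, ∑ j ∈ Finset.range N,
          (if i ≤ k then d k else 0) * ((if j ≤ l then e l else 0) * F i j)
        = ∑ i ∈ Finset.range N, (if i ≤ k then d k else 0) *
            (e l * ∑ j ∈ Finset.range (l+1), F i j) := by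
          refine Finset.sum_congr rfl fun i _ => ?_
          rw [← Finset.mul_sum, inner i]
      _ = ∑ i ∈ Finset.range N,
            (if i ≤ k then d k * e l * ∑ j ∈ Finset.range (l+1), F i j else 0) :=
          Finset.sum_congr rfl fun i _ => by split <;> ring
      _ = ∑ i ∈ Finset.range (k+1), d k * e l * ∑ j ∈ Finset.range (l+1), F i j :=
          trunc_sum N k hkN _
      _ = d k * e l * (∑ i ∈ Finset.range (k+1), ∑ j ∈ Finset.range (l+1), F i j) :=
          (Finset.mul_sum _ _ _).symm
  set t : ℕ → ℕ → ℕ → ℕ → ℝ := fun i j k l =>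
    (if i ≤ k then d k else 0) * ((if j ≤ l then e l else 0) * F i j) with ht
  calc ∑ i ∈ Finset.range N, ∑ j ∈ Finset.range N, a i * x j * F i j
      = ∑ i ∈ Finset.range N, ∑ j ∈ Finset.range N, ∑ k ∈ Finset.range N, ∑ l ∈ Finset.range N,
          t i j k l := by
        refine Finset.sum_congr rfl fun i hi => Finset.sum_congr rfl fun j hj => ?_
        rw [hA i (mem_range.mp hi), hX j (mem_range.mp hj), Finset.sum_mul_sum, Finset.sum_mul]
        refine Finset.sum_congr rfl fun k _ => ?_
        rw [Finset.sum_mul]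
        exact Finset.sum_congr rfl fun l _ => by simp only [ht]; ring
    _ = ∑ p ∈ Finset.range N ×ˢ Finset.range N, ∑ q ∈ Finset.range N ×ˢ Finset.range N,
          t p.1 p.2 q.1 q.2 := by
        rw [sum_prod_eq N (fun i j => ∑ q ∈ Finset.range N ×ˢ Finset.range N, t i j q.1 q.2)]
        exact Finset.sum_congr rfl fun i _ => Finset.sum_congr rfl fun j _ =>
          (sum_prod_eq N (t i j)).symm
    _ = ∑ q ∈ Finset.range N ×ˢ Finset.range N, ∑ p ∈ Finset.range N ×ˢ Finset.range N,
          t p.1 p.2 q.1 q.2 := Finset.sum_comm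
    _ = ∑ k ∈ Finset.range N, ∑ l ∈ Finset.range N, ∑ p ∈ Finset.range N ×ˢ Finset.range N,
          t p.1 p.2 k l :=
        sum_prod_eq N (fun k l => ∑ p ∈ Finset.range N ×ˢ Finset.range N, t p.1 p.2 k l)
    _ = ∑ k ∈ Finset.range N, ∑ l ∈ Finset.range N, ∑ i ∈ Finset.range N, ∑ j ∈ Finset.range N,
          t i j k l :=
        Finset.sum_congr rfl fun k _ => Finset.sum_congr rfl fun l _ =>
          sum_prod_eq N (fun i j => t i j k l)
    _ = ∑ k ∈ Finset.range N, ∑ l ∈ Finset.range N, d k * e l *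
          (∑ i ∈ Finset.range (k+1), ∑ j ∈ Finset.range (l+1), F i j) :=
        Finset.sum_congr rfl fun k hk => Finset.sum_congr rfl fun l hl => step3 k hk l hl

lemma tele (f : ℕ → ℝ) (i N : ℕ) (h : i ≤ N) :
    ∑ k ∈ Finset.Ico i N, (f k - f (k+1)) = f i - f N := by
  induction N with
  | zero =>
    have : i = 0 := by omega
    subst this
    simp
  | succ M ih =>
    rcases Nat.lt_or_ge i (M+1) with h1 | h1
    · have h2 : i ≤ M := by omega
      rw [Finset.sum_Ico_succ_top h2, ih h2]; ring
    · have : i = M + 1 := by omega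
      subst this
      simp

lemma substochastic (N : ℕ) (a x : ℕ → ℝ) (Q : ℕ → ℕ → ℝ)
    (ha : ∀ k, a (k+1) ≤ a k) (hx : ∀ k, x (k+1) ≤ x k)
    (ha0 : ∀ i, 0 ≤ a i) (hx0 : ∀ i, 0 ≤ x i)
    (hrow : ∀ i, ∑ j ∈ Finset.range N, |Q i j| ≤ 1)
    (hcol : ∀ j, ∑ i ∈ Finset.range N, |Q i j| ≤ 1) :
    |∑ i ∈ Finset.range N, ∑ j ∈ Finset.range N, a i * x j * Q i j| ≤
      ∑ i ∈ Finset.range N, a i * x i := by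
  classical
  set abar : ℕ → ℝ := fun k => if k < N then a k else 0 with habar
  set xbar : ℕ → ℝ := fun k => if k < N then x k else 0 with hxbar
  set d : ℕ → ℝ := fun k => abar k - abar (k+1) with hdd
  set e : ℕ → ℝ := fun k => xbar k - xbar (k+1) with hee
  have hd0 : ∀ k, 0 ≤ d k := by
    intro k
    simp only [hdd, habar]
    split <;> split <;> [linarith [ha k]; linarith [ha0 k]; omega; linarith]
  have he0 : ∀ k, 0 ≤ e k := by
    intro k
    simp only [hee, hxbar]
    split <;> split <;> [linarith [hx k]; linarith [hx0 k]; omega; linarith]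
  have hrep : ∀ (f : ℕ → ℝ) (fbar : ℕ → ℝ), (fbar = fun k => if k < N then f k else 0) →
      ∀ i < N, f i = ∑ k ∈ Finset.range N, if i ≤ k then fbar k - fbar (k+1) else 0 := by
    intro f fbar hfb i hi
    have h1 : (∑ k ∈ Finset.range N, if i ≤ k then fbar k - fbar (k+1) else 0)
        = ∑ k ∈ Finset.Ico i N, (fbar k - fbar (k+1)) := by
      rw [← Finset.sum_subset (fun k hk => Finset.mem_range.mpr (Finset.mem_Ico.mp hk).2
        : Finset.Ico i N ⊆ Finset.range N)
        (fun k hk hnk => if_neg (fun hik => hnk (Finset.mem_Ico.mpr ⟨hik, Finset.mem_range.mp hk⟩)))]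
      exact Finset.sum_congr rfl fun k hk => if_pos (Finset.mem_Ico.mp hk).1
    rw [h1, tele _ _ _ (le_of_lt hi), hfb]
    simp [hi]
  have hrepa := hrep a abar habar
  have hrepx := hrep x xbar hxbar
  -- block sums of the identity kernel
  have blockDelta : ∀ k l : ℕ, (∑ i ∈ Finset.range (k+1), ∑ j ∈ Finset.range (l+1),
      (if i = j then (1:ℝ) else 0)) = min (k+1) (l+1) := by
    intro k l
    have h1 : ∀ i, (∑ j ∈ Finset.range (l+1), if i = j then (1:ℝ) else 0)
        = if i ≤ l then 1 else 0 := by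
      intro i
      rw [Finset.sum_ite_eq]
      simp [Nat.lt_succ_iff]
    rw [Finset.sum_congr rfl fun i _ => h1 i]
    rcases Nat.lt_or_ge l k with h | h
    · rw [trunc_sum (k+1) l (by omega)]
      simp
      omega
    · have : ∀ i ∈ Finset.range (k+1), (if i ≤ l then (1:ℝ) else 0) = 1 := by
        intro i hi
        rw [if_pos (by simp at hi; omega)]
      rw [Finset.sum_congr rfl this]
      simp
      omega
  -- block sums of Q are bounded by min
  have blockQ : ∀ k < N, ∀ l < N, |∑ i ∈ Finset.range (k+1), ∑ j ∈ Finset.range (l+1), Q i j|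
      ≤ min ((k:ℝ)+1) ((l:ℝ)+1) := by
    intro k hk l hl
    have bound : ∀ (Q' : ℕ → ℕ → ℝ) (k' l' : ℕ), k' < N → l' < N →
        (∀ i, ∑ j ∈ Finset.range N, |Q' i j| ≤ 1) →
        |∑ i ∈ Finset.range (k'+1), ∑ j ∈ Finset.range (l'+1), Q' i j| ≤ (k':ℝ)+1 := by
      intro Q' k' l' hk' hl' hrow'
      calc |∑ i ∈ Finset.range (k'+1), ∑ j ∈ Finset.range (l'+1), Q' i j|
          ≤ ∑ i ∈ Finset.range (k'+1), |∑ j ∈ Finset.range (l'+1), Q' i j| :=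
            Finset.abs_sum_le_sum_abs _ _
        _ ≤ ∑ i ∈ Finset.range (k'+1), ∑ j ∈ Finset.range (l'+1), |Q' i j| :=
            Finset.sum_le_sum fun i _ => Finset.abs_sum_le_sum_abs _ _
        _ ≤ ∑ i ∈ Finset.range (k'+1), (1:ℝ) := by
            refine Finset.sum_le_sum fun i _ => ?_
            refine le_trans ?_ (hrow' i)
            exact Finset.sum_le_sum_of_subset_of_nonneg
              (Finset.range_subset_range.mpr (by omega)) (fun j _ _ => abs_nonneg _)
        _ = (k':ℝ)+1 := by simp
    refine le_min (bound Q k l hk hl hrow) ?_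
    rw [Finset.sum_comm]
    exact bound (fun j i => Q i j) l k hl hk hcol
  -- assemble
  rw [expand2 N a x d e Q (hrepa) (hrepx)]
  have hRHS : ∑ i ∈ Finset.range N, a i * x i
      = ∑ k ∈ Finset.range N, ∑ l ∈ Finset.range N, d k * e l * min ((k:ℝ)+1) ((l:ℝ)+1) := by
    have h2 := expand2 N a x d e (fun i j => if i = j then 1 else 0) hrepa hrepx
    have hdiag : ∑ i ∈ Finset.range N, ∑ j ∈ Finset.range N,
        a i * x j * (if i = j then (1:ℝ) else 0) = ∑ i ∈ Finset.range N, a i * x i := by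
      refine Finset.sum_congr rfl fun i hi => ?_
      rw [Finset.sum_eq_single i]
      · simp
      · intro j _ hne
        rw [if_neg (fun h => hne h.symm), mul_zero]
      · intro h
        exact absurd hi h
    rw [hdiag] at h2
    rw [h2]
    refine Finset.sum_congr rfl fun k _ => Finset.sum_congr rfl fun l _ => ?_
    rw [blockDelta k l]
    congr 1
    push_cast
    rfl
  rw [hRHS]
  calc |∑ k ∈ Finset.range N, ∑ l ∈ Finset.range N, d k * e l *
        (∑ i ∈ Finset.range (k+1), ∑ j ∈ Finset.range (l+1), Q i j)|
      ≤ ∑ k ∈ Finset.range N, ∑ l ∈ Finset.range N, |d k * e l *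
        (∑ i ∈ Finset.range (k+1), ∑ j ∈ Finset.range (l+1), Q i j)| := by
        refine le_trans (Finset.abs_sum_le_sum_abs _ _) (Finset.sum_le_sum fun k _ => ?_)
        exact Finset.abs_sum_le_sum_abs _ _
    _ ≤ ∑ k ∈ Finset.range N, ∑ l ∈ Finset.range N, d k * e l * min ((k:ℝ)+1) ((l:ℝ)+1) := by
        refine Finset.sum_le_sum fun k hk => Finset.sum_le_sum fun l hl => ?_
        rw [abs_mul, abs_mul, abs_of_nonneg (hd0 k), abs_of_nonneg (he0 l), mul_assoc]
        rw [mul_assoc]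
        refine mul_le_mul_of_nonneg_left (mul_le_mul_of_nonneg_left ?_ (he0 l)) (hd0 k)
        exact blockQ k (Finset.mem_range.mp hk) l (Finset.mem_range.mp hl)

lemma exists_svd {m n : ℕ} (A : Matrix (Fin m) (Fin n) ℝ) :
    ∃ (v : Fin n → Fin n → ℝ) (u : Fin n → Fin m → ℝ),
      (∀ i j, v i ⬝ᵥ v j = if i = j then 1 else 0) ∧
      (∀ a b, (∑ i, v i a * v i b) = if a = b then 1 else 0) ∧
      (∀ i j : Fin n, sval A (i:ℕ) ≠ 0 → sval A (j:ℕ) ≠ 0 →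
        u i ⬝ᵥ u j = if i = j then 1 else 0) ∧
      (∀ i : Fin n, sval A (i:ℕ) = 0 → u i = 0) ∧
      (∀ i : Fin n, A *ᵥ v i = sval A (i:ℕ) • u i) := by
  classical
  set hA := Matrix.isHermitian_transpose_mul_self A with hhA
  set τ := Tuple.sort hA.eigenvalues with hτ
  set idx : Fin n → Fin n := fun i => τ i.rev with hidx
  have idx_inj : Function.Injective idx := fun i j h => by
    have := τ.injective h
    exact Fin.rev_injective this
  set v : Fin n → Fin n → ℝ := fun i => ⇑(hA.eigenvectorBasis (idx i)) with hv
  have hsval : ∀ i : Fin n, sval A (i:ℕ) = Real.sqrt (hA.eigenvalues (idx i)) := fun i =>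
    sval_eq A i
  have hsq : ∀ i : Fin n, sval A (i:ℕ) ^ 2 = hA.eigenvalues (idx i) := fun i => sval_sq A i
  -- orthonormality of v
  have hvo : ∀ i j : Fin n, v i ⬝ᵥ v j = if i = j then 1 else 0 := by
    intro i j
    have h := orthonormal_iff_ite.mp hA.eigenvectorBasis.orthonormal (idx i) (idx j)
    have hinner : (inner ℝ (hA.eigenvectorBasis (idx i)) (hA.eigenvectorBasis (idx j)) : ℝ)
        = v i ⬝ᵥ v j := by
      rw [PiLp.inner_apply]
      simp [dotProduct, hv, mul_comm]
    rw [← hinner, h]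
    by_cases hij : i = j
    · rw [if_pos hij, if_pos (by rw [hij])]
    · rw [if_neg hij, if_neg (fun h' => hij (idx_inj h'))]
  -- completeness of v
  have hvc : ∀ a b, (∑ i, v i a * v i b) = if a = b then 1 else 0 := by
    intro a b
    have hsum : (∑ i, v i a * v i b) = ∑ k, ⇑(hA.eigenvectorBasis k) a * ⇑(hA.eigenvectorBasis k) b := by
      refine Fintype.sum_equiv ((Fin.revPerm).trans τ) _ _ fun i => ?_
      simp [hv, hidx, Equiv.trans_apply]
    rw [hsum]
    have hU := Matrix.mem_unitaryGroup_iff.mp (Matrix.IsHermitian.eigenvectorUnitary hA).2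
    have h1 : ((Matrix.IsHermitian.eigenvectorUnitary hA : Matrix (Fin n) (Fin n) ℝ) *
        star (Matrix.IsHermitian.eigenvectorUnitary hA : Matrix (Fin n) (Fin n) ℝ)) a b
        = ∑ k, ⇑(hA.eigenvectorBasis k) a * ⇑(hA.eigenvectorBasis k) b := by
      rw [Matrix.mul_apply]
      refine Finset.sum_congr rfl fun k _ => ?_
      rw [Matrix.star_apply, Matrix.IsHermitian.eigenvectorUnitary_apply,
        Matrix.IsHermitian.eigenvectorUnitary_apply]
      simp
    rw [← h1, hU, Matrix.one_apply]
  -- key inner product identity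
  have key : ∀ i j : Fin n, (A *ᵥ v i) ⬝ᵥ (A *ᵥ v j) = if i = j then hA.eigenvalues (idx j) else 0 := by
    intro i j
    have h1 : (A *ᵥ v i) ⬝ᵥ (A *ᵥ v j) = v i ⬝ᵥ ((Aᵀ * A) *ᵥ v j) := by
      rw [← Matrix.mulVec_mulVec, dotProduct_mulVec (v i) Aᵀ, Matrix.vecMul_transpose]
    rw [h1, Matrix.IsHermitian.mulVec_eigenvectorBasis, dotProduct_smul, hvo i j,
      smul_eq_mul]
    split <;> simp
  have hAv0 : ∀ i : Fin n, sval A (i:ℕ) = 0 → A *ᵥ v i = 0 := by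
    intro i h0
    have h1 : (A *ᵥ v i) ⬝ᵥ (A *ᵥ v i) = 0 := by
      rw [key i i, if_pos rfl, ← hsq i, h0]
      norm_num
    exact dotProduct_self_eq_zero.mp h1
  set u : Fin n → Fin m → ℝ := fun i =>
    if sval A (i:ℕ) = 0 then 0 else (sval A (i:ℕ))⁻¹ • (A *ᵥ v i) with hu
  refine ⟨v, u, hvo, hvc, ?_, ?_, ?_⟩
  · intro i j hi hj
    rw [hu]
    simp only [if_neg hi, if_neg hj]
    rw [smul_dotProduct, dotProduct_smul, key i j, smul_eq_mul, smul_eq_mul]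
    by_cases hij : i = j
    · subst hij
      rw [if_pos rfl, if_pos rfl, ← hsq i]
      field_simp
    · rw [if_neg hij, if_neg hij]
      ring
  · intro i h0
    rw [hu]
    simp [h0]
  · intro i
    by_cases h0 : sval A (i:ℕ) = 0
    · rw [hAv0 i h0, h0, hu]
      simp
    · rw [hu]
      simp only [if_neg h0]
      rw [smul_smul, mul_inv_cancel₀ h0, one_smul]

lemma vonNeumann {m n : ℕ} (X B : Matrix (Fin m) (Fin n) ℝ) :
    |Matrix.trace (Bᵀ * X)| ≤ ∑ i ∈ Finset.range n, sval B i * sval X i := by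
  classical
  obtain ⟨v, u, hvo, hvc, huo, hu0, hBv⟩ := exists_svd B
  obtain ⟨w, p, hwo, hwc, hpo, hp0, hXw⟩ := exists_svd X
  -- trace in the eigenbasis of BᵀB
  have hstep : ∀ c : Fin m,
      ∑ i : Fin n, (∑ a, B c a * v i a) * (∑ b, X c b * v i b) = ∑ a, B c a * X c a := by
    intro c
    calc ∑ i : Fin n, (∑ a, B c a * v i a) * (∑ b, X c b * v i b)
        = ∑ i : Fin n, ∑ a, ∑ b, (B c a * X c b) * (v i a * v i b) := by
          refine Finset.sum_congr rfl fun i _ => ?_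
          rw [Finset.sum_mul_sum]
          exact Finset.sum_congr rfl fun a _ => Finset.sum_congr rfl fun b _ => by ring
      _ = ∑ a, ∑ i : Fin n, ∑ b, (B c a * X c b) * (v i a * v i b) := Finset.sum_comm
      _ = ∑ a, ∑ b, ∑ i : Fin n, (B c a * X c b) * (v i a * v i b) :=
          Finset.sum_congr rfl fun a _ => Finset.sum_comm
      _ = ∑ a, ∑ b, (B c a * X c b) * (if a = b then 1 else 0) := by
          refine Finset.sum_congr rfl fun a _ => Finset.sum_congr rfl fun b _ => ?_
          rw [← Finset.mul_sum, hvc a b]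
      _ = ∑ a, B c a * X c a := by
          refine Finset.sum_congr rfl fun a _ => ?_
          rw [Finset.sum_eq_single a]
          · simp
          · intro b _ hne
            rw [if_neg (fun h => hne h.symm), mul_zero]
          · intro h
            exact absurd (Finset.mem_univ a) h
  have htr : Matrix.trace (Bᵀ * X) = ∑ i : Fin n, (B *ᵥ v i) ⬝ᵥ (X *ᵥ v i) := by
    have h1 : Matrix.trace (Bᵀ * X) = ∑ a : Fin n, ∑ c : Fin m, B c a * X c a := by
      simp only [Matrix.trace, Matrix.diag, Matrix.mul_apply, Matrix.transpose_apply]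
    have h2 : ∑ i : Fin n, (B *ᵥ v i) ⬝ᵥ (X *ᵥ v i)
        = ∑ c : Fin m, ∑ a : Fin n, B c a * X c a := by
      calc ∑ i : Fin n, (B *ᵥ v i) ⬝ᵥ (X *ᵥ v i)
          = ∑ i : Fin n, ∑ c : Fin m, (∑ a, B c a * v i a) * (∑ b, X c b * v i b) := by
            refine Finset.sum_congr rfl fun i _ => ?_
            simp only [dotProduct, Matrix.mulVec, dotProduct]
        _ = ∑ c : Fin m, ∑ i : Fin n, (∑ a, B c a * v i a) * (∑ b, X c b * v i b) :=
            Finset.sum_comm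
        _ = ∑ c : Fin m, ∑ a : Fin n, B c a * X c a :=
            Finset.sum_congr rfl fun c _ => hstep c
    rw [h1, h2, Finset.sum_comm]
  -- expand X *ᵥ v i in the eigenbasis of XᵀX
  have hself : ∀ y : Fin n → ℝ, ∀ a, y a = ∑ j : Fin n, (w j ⬝ᵥ y) * w j a := by
    intro y a
    calc y a = ∑ b, y b * (if a = b then 1 else 0) := by
          rw [Finset.sum_eq_single a]
          · simp
          · intro b _ hne
            rw [if_neg (fun h => hne h.symm), mul_zero]
          · intro h
            exact absurd (Finset.mem_univ a) h
      _ = ∑ b, y b * ∑ j : Fin n, w j a * w j b := by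
          refine Finset.sum_congr rfl fun b _ => ?_
          rw [hwc a b]
      _ = ∑ b, ∑ j : Fin n, y b * (w j a * w j b) := by
          refine Finset.sum_congr rfl fun b _ => ?_
          rw [Finset.mul_sum]
      _ = ∑ j : Fin n, ∑ b, y b * (w j a * w j b) := Finset.sum_comm
      _ = ∑ j : Fin n, (w j ⬝ᵥ y) * w j a := by
          refine Finset.sum_congr rfl fun j _ => ?_
          simp only [dotProduct]
          rw [Finset.sum_mul]
          exact Finset.sum_congr rfl fun b _ => by ring
  have hXv : ∀ i : Fin n, (u i) ⬝ᵥ (X *ᵥ v i)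
      = ∑ j : Fin n, sval X (j:ℕ) * ((w j ⬝ᵥ v i) * (u i ⬝ᵥ p j)) := by
    intro i
    have hv' : v i = ∑ j : Fin n, (w j ⬝ᵥ v i) • w j := by
      funext a
      rw [Finset.sum_apply]
      simpa using hself (v i) a
    have hlin : X *ᵥ (∑ j : Fin n, (w j ⬝ᵥ v i) • w j)
        = ∑ j : Fin n, (w j ⬝ᵥ v i) • (X *ᵥ w j) := by
      funext c
      simp only [Matrix.mulVec, dotProduct, Finset.sum_apply, Pi.smul_apply,
        smul_eq_mul, Finset.mul_sum]
      rw [Finset.sum_comm]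
      exact Finset.sum_congr rfl fun j _ => Finset.sum_congr rfl fun a _ => by ring
    have hds : ∀ (y : Fin n → Fin m → ℝ) (z : Fin m → ℝ),
        z ⬝ᵥ (∑ j, y j) = ∑ j, z ⬝ᵥ y j := by
      intro y z
      simp only [dotProduct, Finset.sum_apply, Finset.mul_sum]
      exact Finset.sum_comm
    calc (u i) ⬝ᵥ (X *ᵥ v i)
        = (u i) ⬝ᵥ (X *ᵥ (∑ j : Fin n, (w j ⬝ᵥ v i) • w j)) := by rw [← hv']
      _ = (u i) ⬝ᵥ (∑ j : Fin n, (w j ⬝ᵥ v i) • (X *ᵥ w j)) := by rw [hlin]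
      _ = ∑ j : Fin n, (u i) ⬝ᵥ ((w j ⬝ᵥ v i) • (X *ᵥ w j)) :=
          hds (fun j => (w j ⬝ᵥ v i) • (X *ᵥ w j)) (u i)
      _ = ∑ j : Fin n, sval X (j:ℕ) * ((w j ⬝ᵥ v i) * (u i ⬝ᵥ p j)) := by
          refine Finset.sum_congr rfl fun j _ => ?_
          rw [dotProduct_smul, hXw j, dotProduct_smul]
          simp only [smul_eq_mul]
          ring
  have hmain : Matrix.trace (Bᵀ * X)
      = ∑ i : Fin n, ∑ j : Fin n,
          sval B (i:ℕ) * sval X (j:ℕ) * ((w j ⬝ᵥ v i) * (u i ⬝ᵥ p j)) := by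
    rw [htr]
    refine Finset.sum_congr rfl fun i _ => ?_
    rw [hBv i, smul_dotProduct, smul_eq_mul, hXv i, Finset.mul_sum]
    exact Finset.sum_congr rfl fun j _ => by ring
  -- the substochastic kernel
  set Q : ℕ → ℕ → ℝ := fun i j =>
    if hi : i < n then if hj : j < n then
      (w ⟨j, hj⟩ ⬝ᵥ v ⟨i, hi⟩) * (u ⟨i, hi⟩ ⬝ᵥ p ⟨j, hj⟩) else 0 else 0 with hQ
  have hQfin : ∀ (i j : Fin n), Q (i:ℕ) (j:ℕ) = (w j ⬝ᵥ v i) * (u i ⬝ᵥ p j) := by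
    intro i j
    simp only [hQ, dif_pos i.isLt, dif_pos j.isLt, Fin.eta]
  have hrange : Matrix.trace (Bᵀ * X)
      = ∑ i ∈ Finset.range n, ∑ j ∈ Finset.range n, sval B i * sval X j * Q i j := by
    rw [hmain, ← Fin.sum_univ_eq_sum_range (fun i =>
      ∑ j ∈ Finset.range n, sval B i * sval X j * Q i j) n]
    refine Finset.sum_congr rfl fun i _ => ?_
    rw [← Fin.sum_univ_eq_sum_range (fun j => sval B (i:ℕ) * sval X j * Q (i:ℕ) j) n]
    exact Finset.sum_congr rfl fun j _ => by rw [hQfin i j]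
  -- norms of the vectors
  have hvnorm : ∀ i : Fin n, v i ⬝ᵥ v i = 1 := fun i => by rw [hvo i i, if_pos rfl]
  have hwnorm : ∀ j : Fin n, w j ⬝ᵥ w j = 1 := fun j => by rw [hwo j j, if_pos rfl]
  have hunorm : ∀ i : Fin n, u i ⬝ᵥ u i ≤ 1 := by
    intro i
    by_cases h : sval B (i:ℕ) = 0
    · rw [hu0 i h]
      simp
    · rw [huo i i h h, if_pos rfl]
  have hpnorm : ∀ j : Fin n, p j ⬝ᵥ p j ≤ 1 := by
    intro j
    by_cases h : sval X (j:ℕ) = 0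
    · rw [hp0 j h]
      simp
    · rw [hpo j j h h, if_pos rfl]
  -- Bessel bounds
  have bes_w : ∀ y : Fin n → ℝ, ∑ j : Fin n, (y ⬝ᵥ w j) ^ 2 ≤ y ⬝ᵥ y := fun y =>
    bessel Finset.univ w (fun a _ b _ => hwo a b) y
  have bes_v : ∀ y : Fin n → ℝ, ∑ i : Fin n, (y ⬝ᵥ v i) ^ 2 ≤ y ⬝ᵥ y := fun y =>
    bessel Finset.univ v (fun a _ b _ => hvo a b) y
  have bes_p : ∀ y : Fin m → ℝ, ∑ j : Fin n, (y ⬝ᵥ p j) ^ 2 ≤ y ⬝ᵥ y := by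
    intro y
    have h1 : ∑ j : Fin n, (y ⬝ᵥ p j) ^ 2
        = ∑ j ∈ Finset.univ.filter (fun j : Fin n => sval X (j:ℕ) ≠ 0), (y ⬝ᵥ p j) ^ 2 := by
      rw [Finset.sum_filter_of_ne]
      intro j _ hne h
      rw [hp0 j h] at hne
      simp at hne
    rw [h1]
    exact bessel _ p (fun a ha b hb => hpo a b (Finset.mem_filter.mp ha).2
      (Finset.mem_filter.mp hb).2) y
  have bes_u : ∀ y : Fin m → ℝ, ∑ i : Fin n, (y ⬝ᵥ u i) ^ 2 ≤ y ⬝ᵥ y := by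
    intro y
    have h1 : ∑ i : Fin n, (y ⬝ᵥ u i) ^ 2
        = ∑ i ∈ Finset.univ.filter (fun i : Fin n => sval B (i:ℕ) ≠ 0), (y ⬝ᵥ u i) ^ 2 := by
      rw [Finset.sum_filter_of_ne]
      intro i _ hne h
      rw [hu0 i h] at hne
      simp at hne
    rw [h1]
    exact bessel _ u (fun a ha b hb => huo a b (Finset.mem_filter.mp ha).2
      (Finset.mem_filter.mp hb).2) y
  -- row and column bounds
  have hrow : ∀ i, ∑ j ∈ Finset.range n, |Q i j| ≤ 1 := by
    intro i
    by_cases hi : i < n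
    · set I : Fin n := ⟨i, hi⟩
      have h1 : ∑ j ∈ Finset.range n, |Q i j|
          = ∑ j : Fin n, |w j ⬝ᵥ v I| * |u I ⬝ᵥ p j| := by
        rw [← Fin.sum_univ_eq_sum_range (fun j => |Q i j|) n]
        refine Finset.sum_congr rfl fun j _ => ?_
        rw [show Q i (j:ℕ) = Q (I:ℕ) (j:ℕ) from rfl, hQfin I j, abs_mul]
      rw [h1]
      refine le_trans (csabs Finset.univ (fun j => w j ⬝ᵥ v I) (fun j => u I ⬝ᵥ p j)) ?_
      have b1 : ∑ j : Fin n, (w j ⬝ᵥ v I) ^ 2 ≤ 1 := by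
        refine le_trans (le_of_eq ?_) (le_trans (bes_w (v I)) (le_of_eq (hvnorm I)))
        exact Finset.sum_congr rfl fun j _ => by rw [dotProduct_comm]
      have b2 : ∑ j : Fin n, (u I ⬝ᵥ p j) ^ 2 ≤ 1 := le_trans (bes_p (u I)) (hunorm I)
      calc Real.sqrt (∑ j : Fin n, (w j ⬝ᵥ v I) ^ 2) * Real.sqrt (∑ j : Fin n, (u I ⬝ᵥ p j) ^ 2)
          ≤ Real.sqrt 1 * Real.sqrt 1 :=
            mul_le_mul (Real.sqrt_le_sqrt b1) (Real.sqrt_le_sqrt b2) (Real.sqrt_nonneg _)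
              (Real.sqrt_nonneg _)
        _ = 1 := by rw [Real.sqrt_one, mul_one]
    · have : ∀ j ∈ Finset.range n, |Q i j| = 0 := by
        intro j _
        rw [hQ]
        simp [dif_neg hi]
      rw [Finset.sum_congr rfl this]
      simp
  have hcol : ∀ j, ∑ i ∈ Finset.range n, |Q i j| ≤ 1 := by
    intro j
    by_cases hj : j < n
    · set J : Fin n := ⟨j, hj⟩
      have h1 : ∑ i ∈ Finset.range n, |Q i j|
          = ∑ i : Fin n, |w J ⬝ᵥ v i| * |p J ⬝ᵥ u i| := by
        rw [← Fin.sum_univ_eq_sum_range (fun i => |Q i j|) n]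
        refine Finset.sum_congr rfl fun i _ => ?_
        rw [show Q (i:ℕ) j = Q (i:ℕ) (J:ℕ) from rfl, hQfin i J, abs_mul,
          dotProduct_comm (u i) (p J)]
      rw [h1]
      refine le_trans (csabs Finset.univ (fun i => w J ⬝ᵥ v i) (fun i => p J ⬝ᵥ u i)) ?_
      have b1 : ∑ i : Fin n, (w J ⬝ᵥ v i) ^ 2 ≤ 1 := le_trans (bes_v (w J)) (le_of_eq (hwnorm J))
      have b2 : ∑ i : Fin n, (p J ⬝ᵥ u i) ^ 2 ≤ 1 := le_trans (bes_u (p J)) (hpnorm J)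
      calc Real.sqrt (∑ i : Fin n, (w J ⬝ᵥ v i) ^ 2) * Real.sqrt (∑ i : Fin n, (p J ⬝ᵥ u i) ^ 2)
          ≤ Real.sqrt 1 * Real.sqrt 1 :=
            mul_le_mul (Real.sqrt_le_sqrt b1) (Real.sqrt_le_sqrt b2) (Real.sqrt_nonneg _)
              (Real.sqrt_nonneg _)
        _ = 1 := by rw [Real.sqrt_one, mul_one]
    · have : ∀ i ∈ Finset.range n, |Q i j| = 0 := by
        intro i _
        simp [hQ, hj]
      rw [Finset.sum_congr rfl this]
      simp
  rw [hrange]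
  exact substochastic n (sval B) (sval X) Q
    (fun k => sval_anti B (Nat.le_succ k)) (fun k => sval_anti X (Nat.le_succ k))
    (sval_nonneg B) (sval_nonneg X) hrow hcol
lemma sval_rank_zero {m n : ℕ} (B : Matrix (Fin m) (Fin n) ℝ) (r : ℕ) (hB : B.rank ≤ r)
    (i : ℕ) (hi : r ≤ i) : sval B i = 0 := by
  by_cases hin : i < n
  · by_contra hne
    have hpos : 0 < sval B i := (sval_nonneg B i).lt_of_ne (Ne.symm hne)
    set hA := Matrix.isHermitian_transpose_mul_self B with hhA
    have hmap : ∀ k : Fin (i+1),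
        hA.eigenvalues (Tuple.sort hA.eigenvalues ((⟨(k:ℕ), by omega⟩ : Fin n).rev)) ≠ 0 := by
      intro k
      have h1 : 0 < sval B (k : ℕ) :=
        lt_of_lt_of_le hpos (sval_anti B (by omega : (k:ℕ) ≤ i))
      have h2 := sval_eq B (⟨(k:ℕ), by omega⟩ : Fin n)
      intro h0
      rw [h0, Real.sqrt_zero] at h2
      simp only [Fin.val_mk] at h2
      rw [h2] at h1
      exact lt_irrefl 0 h1
    set f : Fin (i+1) → {k // hA.eigenvalues k ≠ 0} := fun k =>
      ⟨Tuple.sort hA.eigenvalues ((⟨(k:ℕ), by omega⟩ : Fin n).rev), hmap k⟩ with hf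
    have hinj : Function.Injective f := by
      intro a b hab
      have h1 := congrArg Subtype.val hab
      simp only [hf] at h1
      have h2 := (Tuple.sort hA.eigenvalues).injective h1
      have h3 := Fin.rev_injective h2
      have h4 : (a : ℕ) = (b : ℕ) := by
        have := congrArg Fin.val h3
        simpa using this
      exact Fin.ext h4
    have hcard := Fintype.card_le_of_injective f hinj
    rw [Fintype.card_fin] at hcard
    have h3 : (Bᵀ * B).rank = Fintype.card {k // hA.eigenvalues k ≠ 0} :=
      hA.rank_eq_card_non_zero_eigs
    have h4 : (Bᵀ * B).rank = B.rank := Matrix.rank_transpose_mul_self B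
    omega
  · simp [sval, hin]

end Helpers

/-- dual bound `|⟨B, X⟩| ≤ ‖B‖_q ‖X_{max(r)}‖_p` for rank-r `B`,
with `p, q ∈ [1, ∞]` Hölder conjugate (`p = ∞` when `q = 1`). -/
theorem trace_le_schatten_mul_truncSchatten {m n : ℕ} (r : ℕ) (hr : r ≤ min m n)
    (X B : Matrix (Fin m) (Fin n) ℝ) (hB : B.rank ≤ r)
    (p q : ℝ≥0∞) (hq : 1 ≤ q) (hpq : 1 / p + 1 / q = 1) :
    |Matrix.trace (Bᵀ * X)| ≤ schattenE q B * schattenTE p r X := by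
  have hrn : r ≤ n := le_trans hr (min_le_right m n)
  have vN := vonNeumann X B
  have htrunc : ∑ i ∈ Finset.range n, sval B i * sval X i
      = ∑ i ∈ Finset.range r, sval B i * sval X i := by
    symm
    apply Finset.sum_subset (Finset.range_subset_range.mpr hrn)
    intro x hx hnx
    rw [sval_rank_zero B r hB x (by simp at hnx; omega), zero_mul]
  rw [htrunc] at vN
  rcases eq_or_ne q ∞ with hqtop | hqfin
  · -- q = ∞, p = 1
    subst hqtop
    have hp1 : p = 1 := by
      rw [one_div, one_div, ENNReal.inv_top, add_zero, ENNReal.inv_eq_one] at hpq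
      exact hpq
    subst hp1
    rw [schattenE, schattenTE, if_pos rfl, schattenTE, if_neg (by simp : (1:ℝ≥0∞) ≠ ∞)]
    simp only [ENNReal.toReal_one, Real.rpow_one, one_div_one]
    refine le_trans vN ?_
    rw [Finset.mul_sum]
    exact Finset.sum_le_sum fun i _ =>
      mul_le_mul_of_nonneg_right (sval_anti B (Nat.zero_le i)) (sval_nonneg X i)
  · rcases eq_or_ne q 1 with hq1 | hqne1
    · -- q = 1, p = ∞
      subst hq1
      have hptop : p = ∞ := by
        have h1 : 1 / p + 1 / 1 = 0 + 1 := by rw [hpq, zero_add]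
        have h2 : 1 / p = 0 := by
          rw [one_div (1:ℝ≥0∞), inv_one] at h1
          exact WithTop.add_right_cancel ENNReal.one_ne_top h1
        rw [one_div, ENNReal.inv_eq_zero] at h2
        exact h2
      subst hptop
      rw [schattenE, schattenTE, if_neg (by simp : (1:ℝ≥0∞) ≠ ∞), schattenTE, if_pos rfl]
      simp only [ENNReal.toReal_one, Real.rpow_one, one_div_one]
      refine le_trans vN ?_
      calc ∑ i ∈ Finset.range r, sval B i * sval X i
          ≤ ∑ i ∈ Finset.range r, sval B i * sval X 0 :=
            Finset.sum_le_sum fun i _ =>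
              mul_le_mul_of_nonneg_left (sval_anti X (Nat.zero_le i)) (sval_nonneg B i)
        _ = (∑ i ∈ Finset.range r, sval B i) * sval X 0 := (Finset.sum_mul _ _ _).symm
        _ ≤ (∑ i ∈ Finset.range n, sval B i) * sval X 0 := by
            refine mul_le_mul_of_nonneg_right ?_ (sval_nonneg X 0)
            exact Finset.sum_le_sum_of_subset_of_nonneg (Finset.range_subset_range.mpr hrn)
              (fun i _ _ => sval_nonneg B i)
    · -- 1 < q < ∞
      have hq1lt : 1 < q := lt_of_le_of_ne hq (Ne.symm hqne1)
      have hqinv_lt : q⁻¹ < 1 := ENNReal.inv_lt_one.mpr hq1lt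
      have hqinv_pos : 0 < q⁻¹ := ENNReal.inv_pos.mpr hqfin
      have hq0 : q ≠ 0 := (zero_lt_one.trans_le hq).ne'
      have hpq' : p⁻¹ + q⁻¹ = 1 := by
        rw [← one_div, ← one_div]
        exact hpq
      have hpinv : p⁻¹ = 1 - q⁻¹ := by
        exact ENNReal.eq_sub_of_add_eq (by simpa using hq0) hpq'
      have hpinv_pos : 0 < p⁻¹ := by
        rw [hpinv]
        exact tsub_pos_of_lt hqinv_lt
      have hpinv_lt : p⁻¹ < 1 := by
        rw [hpinv]
        exact ENNReal.sub_lt_self (by simp) (by simp) (by simpa using hqinv_pos.ne')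
      have hpfin : p ≠ ∞ := by
        intro h
        rw [h] at hpinv_pos
        simp at hpinv_pos
      have hp0 : p ≠ 0 := by
        intro h
        rw [h] at hpinv_lt
        simp at hpinv_lt
      have hp1lt : 1 < p := ENNReal.inv_lt_one.mp hpinv_lt
      have hq'1 : 1 < q.toReal := by
        rw [show (1:ℝ) = (1:ℝ≥0∞).toReal by simp]
        exact (ENNReal.toReal_lt_toReal (by simp) hqfin).mpr hq1lt
      have hp'1 : 1 < p.toReal := by
        rw [show (1:ℝ) = (1:ℝ≥0∞).toReal by simp]
        exact (ENNReal.toReal_lt_toReal (by simp) hpfin).mpr hp1lt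
      have hsum' : (q.toReal)⁻¹ + (p.toReal)⁻¹ = 1 := by
        have h1 : (p⁻¹ + q⁻¹).toReal = (1:ℝ≥0∞).toReal := by rw [hpq']
        rw [ENNReal.toReal_add (by simpa using hp0) (by simpa using hq0)] at h1
        rw [ENNReal.toReal_inv, ENNReal.toReal_inv] at h1
        rw [ENNReal.toReal_one] at h1
        linarith
      have hconj : (q.toReal).HolderConjugate (p.toReal) := Real.holderConjugate_iff.mpr ⟨hq'1, hsum'⟩
      rw [schattenE, schattenTE, if_neg hqfin, schattenTE, if_neg hpfin]
      refine le_trans vN ?_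
      have holder := Real.inner_le_Lp_mul_Lq_of_nonneg (s := Finset.range r)
        (f := fun i => sval B i) (g := fun i => sval X i) hconj
        (fun i _ => sval_nonneg B i) (fun i _ => sval_nonneg X i)
      refine le_trans holder ?_
      refine mul_le_mul_of_nonneg_right ?_
        (Real.rpow_nonneg (Finset.sum_nonneg fun i _ =>
          Real.rpow_nonneg (sval_nonneg X i) _) _)
      refine Real.rpow_le_rpow (Finset.sum_nonneg fun i _ =>
        Real.rpow_nonneg (sval_nonneg B i) _) ?_ (by positivity)
      exact Finset.sum_le_sum_of_subset_of_nonneg (Finset.range_subset_range.mpr hrn)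
        (fun i _ _ => Real.rpow_nonneg (sval_nonneg B i) _)
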